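/- Let f : ℝ^n → ℝ be convex and bounded from below, and let {x_i}_{i≥0} be a proximal sequence for f with parameters {t_i} ⊆ (0,1]. Then the polygonal curve γ : [0, ∞) → ℝ^n defined by γ(i + s) = (1 − s) x_i + s x_{i+1} for i ∈ ℕ and s ∈ [0, 1] is self-contracted. In particular, for all indices i₁ ≤ i₂ ≤ i₃ one has ‖x_{i₂} − x_{i₃}‖ ≤ ‖x_{i₁} − x_{i₃}‖. -/

import Mathlib

/-!
A proximal step `x i ↦ x (i+1)` decreases `f`, and `x (i+1)` is the point of the convex sublevel
set `{f ≤ f (x (i+1))}` closest to `x i`; the projection inequality gives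
`⟪x i - x (i+1), z - x (i+1)⟫ ≤ 0` for every `z` in that set. Fix `z = γ T` on the `k`-th segment.
By convexity `f z ≤ f (x k) ≤ f (x (j+1))` for all `j < k`, so along each earlier segment the
squared distance to `z` is a convex quadratic with nonpositive slope at the segment's end, hence
decreasing; on the `k`-th segment the distance to `z` decreases linearly.
-/

open Set Metric

/-- A curve `γ : I → ℝⁿ` is *self-contracted* if for all `t₁ ≤ t₂ ≤ t₃` in `I`,
`‖γ t₁ - γ t₃‖ ≥ ‖γ t₂ - γ t₃‖`. -/
def SelfContracted {n : ℕ} (I : Set ℝ) (γ : ℝ → EuclideanSpace ℝ (Fin n)) : Prop :=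
  ∀ t₁ ∈ I, ∀ t₂ ∈ I, ∀ t₃ ∈ I, t₁ ≤ t₂ → t₂ ≤ t₃ →
    ‖γ t₂ - γ t₃‖ ≤ ‖γ t₁ - γ t₃‖

/-- `x` is a *proximal sequence* for `f` with parameters `t` if for every `i`,
`x (i+1)` minimizes `y ↦ f y + ‖y - x i‖² / (2 t i)`. -/
def IsProximalSeq {n : ℕ} (f : EuclideanSpace ℝ (Fin n) → ℝ) (t : ℕ → ℝ)
    (x : ℕ → EuclideanSpace ℝ (Fin n)) : Prop :=
  ∀ i, ∀ y, f (x (i + 1)) + ‖x (i + 1) - x i‖ ^ 2 / (2 * t i) ≤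
    f y + ‖y - x i‖ ^ 2 / (2 * t i)

/-- The piecewise-linear curve visiting the points `p 0, p 1, p 2, …` in order, with
`p j` reached at time `j` and affine interpolation on `[j, j + 1]`, i.e.
`s ↦ (1 - (s - j)) • p j + (s - j) • p (j+1)` for `s ∈ [j, j+1]`. -/
noncomputable def polygonalCurve {n : ℕ} (p : ℕ → EuclideanSpace ℝ (Fin n)) (s : ℝ) :
    EuclideanSpace ℝ (Fin n) :=
  (1 - (s - (⌊s⌋₊ : ℝ))) • p ⌊s⌋₊ + (s - (⌊s⌋₊ : ℝ)) • p (⌊s⌋₊ + 1)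

open AffineMap
open scoped InnerProductSpace

section InnerProductSpace

variable {E : Type*} [NormedAddCommGroup E] [InnerProductSpace ℝ E]

lemma antitoneOn_norm_lineMap_sub {a b z : E} (h : ⟪a - b, z - b⟫_ℝ ≤ 0) :
    AntitoneOn (fun s : ℝ => ‖lineMap a b s - z‖) (Iic 1) := by
  intro s hs s' hs' hss'
  have hsq (u : ℝ) : ‖lineMap a b u - z‖ ^ 2 =
      ‖a - z‖ ^ 2 + 2 * u * ⟪a - z, b - a⟫_ℝ + u ^ 2 * ‖b - a‖ ^ 2 := by
    rw [lineMap_apply_module', show u • (b - a) + a - z = (a - z) + u • (b - a) by abel,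
      norm_add_sq_real, real_inner_smul_right, norm_smul, mul_pow, Real.norm_eq_abs, sq_abs]
    ring
  have hslope_one : ⟪a - z, b - a⟫_ℝ + ‖b - a‖ ^ 2 ≤ 0 := by
    rwa [show a - b = -(b - a) by abel, show z - b = -((a - z) + (b - a)) by abel,
      inner_neg_neg, inner_add_right, real_inner_self_eq_norm_sq, real_inner_comm] at h
  have hchord : 2 * ⟪a - z, b - a⟫_ℝ + (s + s') * ‖b - a‖ ^ 2 ≤ 0 := by
    nlinarith [mem_Iic.1 hs, mem_Iic.1 hs', sq_nonneg ‖b - a‖]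
  rw [← sq_le_sq₀ (norm_nonneg _) (norm_nonneg _), ← sub_nonpos, hsq, hsq]
  calc _ = (s' - s) * (2 * ⟪a - z, b - a⟫_ℝ + (s + s') * ‖b - a‖ ^ 2) := by ring
    _ ≤ 0 := mul_nonpos_of_nonneg_of_nonpos (sub_nonneg.2 hss') hchord

lemma antitoneOn_norm_lineMap_sub_lineMap (a b : E) (r : ℝ) :
    AntitoneOn (fun s : ℝ => ‖lineMap a b s - lineMap a b r‖) (Iic r) := by
  intro s hs s' hs' hss'
  simp only [← dist_eq_norm, dist_lineMap_lineMap, Real.dist_eq,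
    abs_of_nonpos (sub_nonpos.2 (mem_Iic.1 hs)), abs_of_nonpos (sub_nonpos.2 (mem_Iic.1 hs'))]
  gcongr

lemma inner_sub_nonpos_of_forall_prox_le {f : E → ℝ} (hf : ConvexOn ℝ univ f) {t : ℝ}
    (ht : 0 < t) {a b z : E}
    (hb : ∀ y, f b + ‖b - a‖ ^ 2 / (2 * t) ≤ f y + ‖y - a‖ ^ 2 / (2 * t))
    (hz : f z ≤ f b) :
    ⟪a - b, z - b⟫_ℝ ≤ 0 := by
  set K := {y | f y ≤ f b}
  have hK : Convex ℝ K := by simpa using hf.convex_le (f b)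
  have hbK : b ∈ K := le_refl (f b)
  have hclosest (y : E) (hy : f y ≤ f b) : ‖a - b‖ ≤ ‖a - y‖ := by
    have hsq : ‖b - a‖ ^ 2 ≤ ‖y - a‖ ^ 2 :=
      (div_le_div_iff_of_pos_right (by positivity : (0 : ℝ) < 2 * t)).1 (by linarith [hb y])
    rw [norm_sub_rev a b, norm_sub_rev a y]
    exact (sq_le_sq₀ (norm_nonneg _) (norm_nonneg _)).1 hsq
  have : Nonempty K := ⟨⟨b, hbK⟩⟩
  refine (norm_eq_iInf_iff_real_inner_le_zero hK hbK).1 ?_ z hz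
  exact le_antisymm (le_ciInf fun w => hclosest w w.2)
    (ciInf_le ⟨0, forall_mem_range.2 fun _ => norm_nonneg _⟩ (⟨b, hbK⟩ : K))

end InnerProductSpace

lemma antitoneOn_Icc_zero_natCast {β : Type*} [Preorder β] {g : ℝ → β} {m : ℕ}
    (h : ∀ j < m, AntitoneOn g (Icc (j : ℝ) (j + 1))) : AntitoneOn g (Icc 0 m) := by
  induction m with
  | zero => simp
  | succ m ih =>
    have hglue := (ih fun j hj => h j (Nat.lt_succ_of_lt hj)).union_right
      (h m (Nat.lt_succ_self m)) (isGreatest_Icc (Nat.cast_nonneg m)) (isLeast_Icc (by linarith))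
    rwa [Icc_union_Icc_eq_Icc (Nat.cast_nonneg m) (by linarith), ← Nat.cast_succ] at hglue

section Polygonal

variable {n : ℕ}

lemma polygonalCurve_eq_lineMap (p : ℕ → EuclideanSpace ℝ (Fin n)) {j : ℕ} {s : ℝ}
    (hjs : (j : ℝ) ≤ s) (hsj : s ≤ j + 1) :
    polygonalCurve p s = lineMap (p j) (p (j + 1)) (s - j) := by
  rcases hsj.lt_or_eq with hlt | rfl
  · have hfloor : ⌊s⌋₊ = j := (Nat.floor_eq_iff ((Nat.cast_nonneg j).trans hjs)).2 ⟨hjs, hlt⟩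
    rw [polygonalCurve, hfloor, lineMap_apply_module]
  · have hfloor : ⌊(j : ℝ) + 1⌋₊ = j + 1 := by exact_mod_cast Nat.floor_natCast (j + 1)
    simp [polygonalCurve, hfloor]

lemma polygonalCurve_natCast (p : ℕ → EuclideanSpace ℝ (Fin n)) (m : ℕ) :
    polygonalCurve p m = p m := by
  simp [polygonalCurve]

lemma antitoneOn_norm_polygonalCurve_sub_of_inner {p : ℕ → EuclideanSpace ℝ (Fin n)}
    {z : EuclideanSpace ℝ (Fin n)} {j : ℕ} (h : ⟪p j - p (j + 1), z - p (j + 1)⟫_ℝ ≤ 0) :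
    AntitoneOn (fun s => ‖polygonalCurve p s - z‖) (Icc (j : ℝ) (j + 1)) := by
  intro s hs s' hs' hss'
  simp only [polygonalCurve_eq_lineMap p hs.1 hs.2, polygonalCurve_eq_lineMap p hs'.1 hs'.2]
  exact antitoneOn_norm_lineMap_sub h (mem_Iic.2 (by linarith [hs.2]))
    (mem_Iic.2 (by linarith [hs'.2])) (by linarith)

end Polygonal

namespace IsProximalSeq

variable {n : ℕ} {f : EuclideanSpace ℝ (Fin n) → ℝ} {t : ℕ → ℝ}
  {x : ℕ → EuclideanSpace ℝ (Fin n)}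

lemma antitone (hx : IsProximalSeq f t x) (ht : ∀ i, 0 < t i) : Antitone (f ∘ x) := by
  refine antitone_nat_of_succ_le fun i => ?_
  calc f (x (i + 1)) ≤ f (x (i + 1)) + ‖x (i + 1) - x i‖ ^ 2 / (2 * t i) :=
        le_add_of_nonneg_right (by have := ht i; positivity)
    _ ≤ f (x i) + ‖x i - x i‖ ^ 2 / (2 * t i) := hx i (x i)
    _ = f (x i) := by simp

lemma antitoneOn_norm_polygonalCurve_sub (hx : IsProximalSeq f t x) (hf : ConvexOn ℝ univ f)
    (ht : ∀ i, 0 < t i) {T : ℝ} (hT : 0 ≤ T) :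
    AntitoneOn (fun s => ‖polygonalCurve x s - polygonalCurve x T‖) (Icc 0 T) := by
  set k := ⌊T⌋₊
  have hkT : (k : ℝ) ≤ T := Nat.floor_le hT
  have hTk : T ≤ k + 1 := (Nat.lt_floor_add_one T).le
  have hz : polygonalCurve x T = lineMap (x k) (x (k + 1)) (T - k) :=
    polygonalCurve_eq_lineMap x hkT hTk
  have hfz : f (polygonalCurve x T) ≤ f (x k) := by
    rw [hz]
    refine (hf.le_on_segment trivial trivial
      (lineMap_mem_segment ℝ _ _ ⟨by linarith, by linarith⟩)).trans ?_
    exact max_le le_rfl (hx.antitone ht (Nat.le_succ k))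
  have hbefore : AntitoneOn (fun s => ‖polygonalCurve x s - polygonalCurve x T‖) (Icc 0 k) :=
    antitoneOn_Icc_zero_natCast fun j hj => antitoneOn_norm_polygonalCurve_sub_of_inner <|
      inner_sub_nonpos_of_forall_prox_le hf (ht j) (hx j) (hfz.trans (hx.antitone ht hj))
  have hlast : AntitoneOn (fun s => ‖polygonalCurve x s - polygonalCurve x T‖) (Icc k T) := by
    intro s hs s' hs' hss'
    simp only [polygonalCurve_eq_lineMap x hs.1 (hs.2.trans hTk),
      polygonalCurve_eq_lineMap x hs'.1 (hs'.2.trans hTk), hz]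
    exact antitoneOn_norm_lineMap_sub_lineMap _ _ _ (mem_Iic.2 (by linarith [hs.2]))
      (mem_Iic.2 (by linarith [hs'.2])) (by linarith)
  rw [← Icc_union_Icc_eq_Icc (Nat.cast_nonneg k) hkT]
  exact hbefore.union_right hlast (isGreatest_Icc (Nat.cast_nonneg k)) (isLeast_Icc hkT)

end IsProximalSeq

theorem proximal_polygonal_selfContracted_general {n : ℕ}
    (f : EuclideanSpace ℝ (Fin n) → ℝ) (hf : ConvexOn ℝ univ f)
    (t : ℕ → ℝ) (ht : ∀ i, t i ∈ Ioc (0 : ℝ) 1)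
    (x : ℕ → EuclideanSpace ℝ (Fin n)) (hx : IsProximalSeq f t x) :
    SelfContracted (Ici 0) (polygonalCurve x) ∧
    ∀ i₁ i₂ i₃ : ℕ, i₁ ≤ i₂ → i₂ ≤ i₃ → ‖x i₂ - x i₃‖ ≤ ‖x i₁ - x i₃‖ := by
  have hγ : SelfContracted (Ici 0) (polygonalCurve x) :=
    fun t₁ h₁ t₂ _ t₃ h₃ h₁₂ h₂₃ => hx.antitoneOn_norm_polygonalCurve_sub hf (fun i => (ht i).1)
      h₃ ⟨h₁, h₁₂.trans h₂₃⟩ ⟨mem_Ici.1 h₁ |>.trans h₁₂, h₂₃⟩ h₁₂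
  refine ⟨hγ, fun i₁ i₂ i₃ h₁₂ h₂₃ => ?_⟩
  have hmem (i : ℕ) : (i : ℝ) ∈ Ici 0 := mem_Ici.2 (Nat.cast_nonneg i)
  simpa only [polygonalCurve_natCast] using
    hγ i₁ (hmem i₁) i₂ (hmem i₂) i₃ (hmem i₃) (Nat.cast_le.2 h₁₂) (Nat.cast_le.2 h₂₃)

/-- The polygonal curve `γ : [0, ∞) → ℝⁿ`, `γ (i + s) = (1 - s) • x i + s • x (i+1)`,
generated by a proximal sequence of a convex function bounded from below is
self-contracted; in particular `‖x i₂ - x i₃‖ ≤ ‖x i₁ - x i₃‖` for `i₁ ≤ i₂ ≤ i₃`. -/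
theorem proximal_polygonal_selfContracted {n : ℕ}
    (f : EuclideanSpace ℝ (Fin n) → ℝ) (hf : ConvexOn ℝ univ f)
    (hbd : BddBelow (range f))
    (t : ℕ → ℝ) (ht : ∀ i, t i ∈ Ioc (0 : ℝ) 1)
    (x : ℕ → EuclideanSpace ℝ (Fin n)) (hx : IsProximalSeq f t x) :
    SelfContracted (Ici 0) (polygonalCurve x) ∧
    ∀ i₁ i₂ i₃ : ℕ, i₁ ≤ i₂ → i₂ ≤ i₃ → ‖x i₂ - x i₃‖ ≤ ‖x i₁ - x i₃‖ :=
  proximal_polygonal_selfContracted_general f hf t ht x hx
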